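/- Let G be a finite simple graph with vertex set V, let φ > 0, let w ≥ 1 be an integer, and let C_1, …, C_k ⊆ V with C := C_1 ∪ … ∪ C_k. Suppose that (i) |∂C_i| ≤ 12φ·Vol(C_i) for every i, (ii) every edge of G having an endpoint in C has an endpoint in at most w of the sets C_1, …, C_k, and (iii) Vol(C) ≤ (23/24)·Vol(V). Then Σ_{i=1}^k Vol(C_i) ≤ w·Vol(C), |∂C| ≤ 12wφ·Vol(C), and |∂C| ≤ 276wφ·min(Vol(C), Vol(V∖C)); in particular, if C is a nonempty proper subset of V then Φ(C) ≤ 276wφ. -/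

import Mathlib

open Finset

/-- The volume of a vertex set: the sum of the degrees (in `G`) of its vertices. -/
def gvol {V : Type*} [Fintype V] (G : SimpleGraph V) [DecidableRel G.Adj]
    (S : Finset V) : ℕ :=
  ∑ v ∈ S, G.degree v

/-- The number of edges of `G` with one endpoint in `S` and the other in `T`
(for disjoint `S`, `T`, counted as ordered pairs `(s, t) ∈ S × T` with `s ~ t`). -/
def gcut {V : Type*} [Fintype V] [DecidableEq V] (G : SimpleGraph V) [DecidableRel G.Adj]
    (S T : Finset V) : ℕ :=
  ((S ×ˢ T).filter fun p => G.Adj p.1 p.2).card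

/-!
A vertex of `C` is counted in `∑ᵢ Vol(Cᵢ)` once per `Cᵢ` containing it, so by (ii) that sum is at
most `w·Vol(C)`. Every boundary edge of `C` is a boundary edge of some `Cᵢ`, hence by (i)
`|∂C| ≤ ∑ᵢ |∂Cᵢ| ≤ 12φ ∑ᵢ Vol(Cᵢ) ≤ 12wφ·Vol(C)`. Finally (iii) says `Vol(C) ≤ 23·Vol(V ∖ C)`,
so `Vol(C) ≤ 23·min(Vol(C), Vol(V ∖ C))`, and `12·23 = 276`.
-/

section Graph

variable {V ι : Type*} [Fintype V] [DecidableEq V] (G : SimpleGraph V) [DecidableRel G.Adj]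

theorem gvol_add_gvol_compl (S : Finset V) : gvol G S + gvol G Sᶜ = gvol G univ :=
  sum_add_sum_compl S _

theorem sum_gvol_eq_sum_card_mul_degree (s : Finset ι) (f : ι → Finset V) :
    ∑ i ∈ s, gvol G (f i) = ∑ v, #{i ∈ s | v ∈ f i} * G.degree v := by
  simp only [gvol]
  rw [sum_comm' (t' := univ) (s' := fun v => {i ∈ s | v ∈ f i}) (by simp)]
  simp only [sum_const, smul_eq_mul]

theorem sum_gvol_le_mul_gvol_biUnion (s : Finset ι) (f : ι → Finset V) (w : ℕ)
    (hmult : ∀ v ∈ s.biUnion f, G.degree v ≠ 0 → #{i ∈ s | v ∈ f i} ≤ w) :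
    ∑ i ∈ s, gvol G (f i) ≤ w * gvol G (s.biUnion f) := by
  rw [sum_gvol_eq_sum_card_mul_degree, gvol, mul_sum]
  have houtside : ∀ v ∉ s.biUnion f, #{i ∈ s | v ∈ f i} = 0 := by
    intro v hv
    simp_all
  calc ∑ v, #{i ∈ s | v ∈ f i} * G.degree v
      = ∑ v ∈ s.biUnion f, #{i ∈ s | v ∈ f i} * G.degree v :=
        (sum_subset (subset_univ _) fun v _ hv => by rw [houtside v hv, zero_mul]).symm
    _ ≤ ∑ v ∈ s.biUnion f, w * G.degree v := by
        refine sum_le_sum fun v hv => ?_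
        by_cases hdeg : G.degree v = 0
        · simp [hdeg]
        · exact Nat.mul_le_mul_right _ (hmult v hv hdeg)

theorem gcut_mono {S S' T T' : Finset V} (hS : S ⊆ S') (hT : T ⊆ T') :
    gcut G S T ≤ gcut G S' T' :=
  card_le_card (filter_subset_filter _ (product_subset_product hS hT))

theorem gcut_biUnion_left_le (s : Finset ι) (f : ι → Finset V) (T : Finset V) :
    gcut G (s.biUnion f) T ≤ ∑ i ∈ s, gcut G (f i) T := by
  refine le_trans (card_le_card ?_) card_biUnion_le
  intro p hp
  simp only [mem_filter, mem_product, mem_biUnion] at hp ⊢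
  obtain ⟨⟨⟨i, hi, hp₁⟩, hp₂⟩, hadj⟩ := hp
  exact ⟨i, hi, ⟨hp₁, hp₂⟩, hadj⟩

theorem gcut_compl_biUnion_le (s : Finset ι) (f : ι → Finset V) :
    gcut G (s.biUnion f) (s.biUnion f)ᶜ ≤ ∑ i ∈ s, gcut G (f i) (f i)ᶜ :=
  (gcut_biUnion_left_le G s f _).trans <| sum_le_sum fun _ hi =>
    gcut_mono G subset_rfl (compl_subset_compl.mpr (subset_biUnion_of_mem f hi))

end Graph

theorem le_mul_min_of_le_mul {x y c : ℝ} (hx : 0 ≤ x) (hc : 1 ≤ c) (hxy : x ≤ c * y) :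
    x ≤ c * min x y := by
  rcases le_total x y with h | h
  · rw [min_eq_left h]; nlinarith
  · rwa [min_eq_right h]

theorem parallel_nibble_union_conductance_general
    {V : Type*} [Fintype V] [DecidableEq V] (G : SimpleGraph V) [DecidableRel G.Adj]
    (φ : ℝ) (hφ : 0 < φ) (w : ℕ)
    (k : ℕ) (Cf : Fin k → Finset V) (C : Finset V)
    (hC : C = Finset.univ.biUnion Cf)
    (hi : ∀ i, (gcut G (Cf i) (Cf i)ᶜ : ℝ) ≤ 12 * φ * gvol G (Cf i))
    (hii : ∀ u v : V, G.Adj u v → (u ∈ C ∨ v ∈ C) →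
      ((Finset.univ : Finset (Fin k)).filter fun i => u ∈ Cf i ∨ v ∈ Cf i).card ≤ w)
    (hiii : (gvol G C : ℝ) ≤ (23 / 24) * gvol G Finset.univ) :
    (∑ i, gvol G (Cf i) ≤ w * gvol G C) ∧
    (gcut G C Cᶜ : ℝ) ≤ 12 * w * φ * gvol G C ∧
    (gcut G C Cᶜ : ℝ) ≤ 276 * w * φ * min (gvol G C : ℝ) (gvol G Cᶜ : ℝ) ∧
    (C.Nonempty → C ≠ Finset.univ →
      (gcut G C Cᶜ : ℝ) / min (gvol G C : ℝ) (gvol G Cᶜ : ℝ) ≤ 276 * w * φ) := by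
  have hsum : ∑ i, gvol G (Cf i) ≤ w * gvol G C := by
    subst hC
    refine sum_gvol_le_mul_gvol_biUnion G _ _ w fun v hv hdeg => ?_
    obtain ⟨u, hvu⟩ := (G.degree_pos_iff_exists_adj v).mp (Nat.pos_of_ne_zero hdeg)
    exact (card_le_card (monotone_filter_right _ fun i _ => Or.inl)).trans
      (hii v u hvu (Or.inl hv))
  have hcut : (gcut G C Cᶜ : ℝ) ≤ 12 * w * φ * gvol G C := by
    have hcut_sum : gcut G C Cᶜ ≤ ∑ i, gcut G (Cf i) (Cf i)ᶜ := hC ▸ gcut_compl_biUnion_le G _ _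
    calc (gcut G C Cᶜ : ℝ) ≤ ∑ i, (gcut G (Cf i) (Cf i)ᶜ : ℝ) := by exact_mod_cast hcut_sum
      _ ≤ ∑ i, 12 * φ * gvol G (Cf i) := sum_le_sum fun i _ => hi i
      _ = 12 * φ * ∑ i, (gvol G (Cf i) : ℝ) := by rw [mul_sum]
      _ ≤ 12 * φ * (w * gvol G C) := by gcongr; exact_mod_cast hsum
      _ = 12 * w * φ * gvol G C := by ring
  have hvol : (gvol G C : ℝ) ≤ 23 * min (gvol G C : ℝ) (gvol G Cᶜ : ℝ) := by
    have hcompl : (gvol G C : ℝ) + gvol G Cᶜ = gvol G univ := by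
      exact_mod_cast gvol_add_gvol_compl G C
    exact le_mul_min_of_le_mul (Nat.cast_nonneg _) (by norm_num) (by linarith)
  have hcond : (gcut G C Cᶜ : ℝ) ≤ 276 * w * φ * min (gvol G C : ℝ) (gvol G Cᶜ : ℝ) :=
    calc (gcut G C Cᶜ : ℝ) ≤ 12 * w * φ * gvol G C := hcut
      _ ≤ 12 * w * φ * (23 * min (gvol G C : ℝ) (gvol G Cᶜ : ℝ)) := by gcongr
      _ = 276 * w * φ * min (gvol G C : ℝ) (gvol G Cᶜ : ℝ) := by ring
  refine ⟨hsum, hcut, hcond, fun _ _ => div_le_of_le_mul₀ ?_ (by positivity) hcond⟩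
  exact le_min (Nat.cast_nonneg _) (Nat.cast_nonneg _)

/-- Let `φ > 0`, `w ≥ 1` an integer, and `C₁, …, C_k ⊆ V` with
`C = C₁ ∪ ⋯ ∪ C_k`. Suppose (i) `|∂Cᵢ| ≤ 12φ·Vol(Cᵢ)` for every `i`, (ii) every edge of `G`
having an endpoint in `C` has an endpoint in at most `w` of the sets `Cᵢ`, and
(iii) `Vol(C) ≤ (23/24)·Vol(V)`. Then `∑ᵢ Vol(Cᵢ) ≤ w·Vol(C)`, `|∂C| ≤ 12wφ·Vol(C)`,
`|∂C| ≤ 276wφ·min(Vol C, Vol Cᶜ)`; in particular, if `C` is a nonempty proper subset of `V`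
then `Φ(C) ≤ 276wφ`. -/
theorem parallel_nibble_union_conductance
    {V : Type*} [Fintype V] [DecidableEq V] (G : SimpleGraph V) [DecidableRel G.Adj]
    (φ : ℝ) (hφ : 0 < φ) (w : ℕ) (hw : 1 ≤ w)
    (k : ℕ) (Cf : Fin k → Finset V) (C : Finset V)
    (hC : C = Finset.univ.biUnion Cf)
    (hi : ∀ i, (gcut G (Cf i) (Cf i)ᶜ : ℝ) ≤ 12 * φ * gvol G (Cf i))
    (hii : ∀ u v : V, G.Adj u v → (u ∈ C ∨ v ∈ C) →
      ((Finset.univ : Finset (Fin k)).filter fun i => u ∈ Cf i ∨ v ∈ Cf i).card ≤ w)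
    (hiii : (gvol G C : ℝ) ≤ (23 / 24) * gvol G Finset.univ) :
    (∑ i, gvol G (Cf i) ≤ w * gvol G C) ∧
    (gcut G C Cᶜ : ℝ) ≤ 12 * w * φ * gvol G C ∧
    (gcut G C Cᶜ : ℝ) ≤ 276 * w * φ * min (gvol G C : ℝ) (gvol G Cᶜ : ℝ) ∧
    (C.Nonempty → C ≠ Finset.univ →
      (gcut G C Cᶜ : ℝ) / min (gvol G C : ℝ) (gvol G Cᶜ : ℝ) ≤ 276 * w * φ) :=
  parallel_nibble_union_conductance_general G φ hφ w k Cf C hC hi hii hiii
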